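/- arXiv:1907.02828 — 5 statements merged into one kernel-verified Lean document; each statement's English description precedes it below -/
import Mathlib

section
/- For the recursively defined functions φ_0(z) = e^z and φ_{k+1}(z) = (φ_k(z) - φ_k(0))/z (with φ_k(0) = 1/k!), one has for every k ≥ 1 and every complex number z the integral representation φ_k(z) = ∫_0^1 e^{(1-s)z} s^{k-1}/(k-1)! ds. -/
/-!
Writing `K_k(s) = e^{(1-s)z} s^k / k!`, one has `d/ds K_{k+1} = K_k - z K_{k+1}` and
`d/ds e^{(1-s)z} = -z e^{(1-s)z}`, so integrating over `[0, 1]` shows that the integrals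
`∫₀¹ K_k` satisfy the same recursion `z φ_{k+1}(z) = φ_k(z) - 1/k!` as the φ-functions,
for every `z`. At `z = 0` this recursion also yields the values `1/k!`, so the two families agree
by induction on `k`.
-/

open Complex intervalIntegral

noncomputable def phiKernel (z : ℂ) (k : ℕ) (s : ℝ) : ℂ :=
  exp ((1 - (s : ℂ)) * z) * (s : ℂ) ^ k / k.factorial

noncomputable def phiFun : ℕ → ℂ → ℂ
  | 0, z => exp z
  | k + 1, z => ∫ s in (0 : ℝ)..1, phiKernel z k s

theorem continuous_phiKernel (z : ℂ) (k : ℕ) : Continuous (phiKernel z k) := by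
  unfold phiKernel
  fun_prop

theorem hasDerivAt_exp_one_sub_mul (z : ℂ) (s : ℝ) :
    HasDerivAt (fun t : ℝ => exp ((1 - (t : ℂ)) * z)) (-z * exp ((1 - (s : ℂ)) * z)) s := by
  have h : HasDerivAt (fun w : ℂ => (1 - w) * z) (-z) (s : ℂ) := by
    simpa using ((hasDerivAt_id (s : ℂ)).const_sub 1).mul_const z
  simpa [mul_comm] using h.cexp.comp_ofReal

theorem hasDerivAt_phiKernel_succ (z : ℂ) (k : ℕ) (s : ℝ) :
    HasDerivAt (phiKernel z (k + 1)) (phiKernel z k s - z * phiKernel z (k + 1) s) s := by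
  have hpow :
      HasDerivAt (fun t : ℝ => (t : ℂ) ^ (k + 1)) ((k + 1 : ℂ) * (s : ℂ) ^ k) s := by
    simpa using (hasDerivAt_pow (k + 1) (s : ℂ)).comp_ofReal
  refine (((hasDerivAt_exp_one_sub_mul z s).mul hpow).div_const
    ((k + 1).factorial : ℂ)).congr_deriv ?_
  have hk : (k.factorial : ℂ) ≠ 0 := by exact_mod_cast k.factorial_ne_zero
  simp only [phiKernel, Nat.factorial_succ, Nat.cast_mul, Nat.cast_succ]
  field_simp
  ring

theorem mul_phiFun_succ (z : ℂ) (k : ℕ) :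
    z * phiFun (k + 1) z = phiFun k z - 1 / k.factorial := by
  cases k with
  | zero =>
    have hderiv : ∀ s ∈ Set.uIcc (0 : ℝ) 1,
        HasDerivAt (fun t : ℝ => -exp ((1 - (t : ℂ)) * z)) (z * phiKernel z 0 s) s := by
      intro s _
      simpa [phiKernel] using (hasDerivAt_exp_one_sub_mul z s).fun_neg
    have hint := integral_eq_sub_of_hasDerivAt hderiv
      (((continuous_phiKernel z 0).const_mul z).intervalIntegrable _ _)
    simp only [phiFun, ← integral_const_mul, hint]
    simp [neg_add_eq_sub]
  | succ k =>
    have hint := integral_eq_sub_of_hasDerivAt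
      (fun s (_ : s ∈ Set.uIcc (0 : ℝ) 1) => hasDerivAt_phiKernel_succ z k s)
      (((continuous_phiKernel z k).sub
        ((continuous_phiKernel z (k + 1)).const_mul z)).intervalIntegrable _ _)
    rw [integral_sub ((continuous_phiKernel z k).intervalIntegrable _ _)
      (((continuous_phiKernel z (k + 1)).const_mul z).intervalIntegrable _ _),
      integral_const_mul] at hint
    have hright : phiKernel z (k + 1) 1 = 1 / (k + 1).factorial := by simp [phiKernel]
    have hleft : phiKernel z (k + 1) 0 = 0 := by simp [phiKernel]
    rw [hright, hleft] at hint
    simp only [phiFun]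
    linear_combination -hint

theorem phiFun_zero_right (k : ℕ) : phiFun k 0 = 1 / k.factorial := by
  linear_combination -mul_phiFun_succ 0 k

/-- Integral representation of the φ-functions:
φ_0(z) = e^z, φ_{k+1}(z) = (φ_k(z) - φ_k(0))/z with φ_k(0) = 1/k!, then for k ≥ 1,
φ_k(z) = ∫_0^1 e^{(1-s)z} s^{k-1}/(k-1)! ds. -/
theorem phi_integral_representation
    (φ : ℕ → ℂ → ℂ)
    (h0 : ∀ z : ℂ, φ 0 z = Complex.exp z)
    (hz0 : ∀ k : ℕ, φ k 0 = 1 / (Nat.factorial k))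
    (hrec : ∀ k : ℕ, ∀ z : ℂ, z ≠ 0 → φ (k + 1) z = (φ k z - 1 / (Nat.factorial k)) / z) :
    ∀ k : ℕ, 1 ≤ k → ∀ z : ℂ,
      φ k z = ∫ s in (0:ℝ)..1,
        Complex.exp ((1 - (s : ℂ)) * z) * (s : ℂ) ^ (k - 1) / (Nat.factorial (k - 1)) := by
  have hφ : ∀ k z, φ k z = phiFun k z := by
    intro k
    induction k with
    | zero => exact h0
    | succ k ih =>
      intro z
      rcases eq_or_ne z 0 with rfl | hz
      · rw [hz0, phiFun_zero_right]
      · rw [hrec k z hz, ih, div_eq_iff hz, ← mul_phiFun_succ, mul_comm]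
  rintro (_ | k) hk z
  · exact absurd hk (by norm_num)
  · exact hφ (k + 1) z
end

section
/- Let A be an n×n complex matrix and f_1, …, f_m vectors. The unique solution of the initial value problem u'(t) + A u(t) = Σ_{k=1}^m f_k t^{k-1}/(k-1)!, u(0) = u_0, is given by u(t) = φ_0(-tA) u_0 + Σ_{k=1}^m φ_k(-tA) f_k t^k, where φ_k are the matrix φ-functions defined via φ_0(z) = e^z and φ_{k+1}(z) = (φ_k(z) - 1/k!)/z. -/
/-!
Multiplying the equation by the integrating factor `exp (s • A)` turns its left-hand side into
the derivative of `s ↦ exp (s • A) *ᵥ u s`, so integrating from `0` to `t` and multiplying by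
`exp (-(t • A))` gives Duhamel's formula
`u t = exp (-(t • A)) *ᵥ u 0 + ∫ s in 0..t, exp ((s - t) • A) *ᵥ F s`.
For the polynomial forcing `F s = ∑ k, (s ^ k / k!) • f k`, the substitution `s = t * σ` turns the
`k`-th term into `t ^ (k + 1) • φ_{k+1}(-tA) f k` in its integral representation.
-/

open intervalIntegral NormedSpace Matrix

theorem intervalIntegral.pow_succ_smul_integral_pow_smul_comp_mul_left
    {E : Type*} [NormedAddCommGroup E] [NormedSpace ℝ E] (g : ℝ → E) (k : ℕ) (t : ℝ) :
    t ^ (k + 1) • ∫ σ in 0..1, σ ^ k • g (t * σ) = ∫ s in 0..t, s ^ k • g s := by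
  have h := smul_integral_comp_mul_left (fun s => s ^ k • g s) t (a := 0) (b := 1)
  simp only [mul_zero, mul_one, mul_pow, mul_smul, integral_smul] at h
  rw [← h, pow_succ', mul_smul]

section

open scoped Matrix.Norms.Operator

variable {𝕜 m ι : Type*} [RCLike 𝕜] [Fintype m] [Fintype ι]

noncomputable def Matrix.mulVecCLM : Matrix m ι 𝕜 →L[ℝ] (ι → 𝕜) →L[ℝ] (m → 𝕜) :=
  (Matrix.mulVecBilin ℝ ℝ).toContinuousBilinearMap

theorem HasDerivAt.matrix_mulVec {M : ℝ → Matrix m ι 𝕜} {v : ℝ → ι → 𝕜} {M' : Matrix m ι 𝕜}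
    {v' : ι → 𝕜} {t : ℝ} (hM : HasDerivAt M M' t) (hv : HasDerivAt v v' t) :
    HasDerivAt (fun s => M s *ᵥ v s) (M t *ᵥ v' + M' *ᵥ v t) t :=
  Matrix.mulVecCLM.hasDerivAt_of_bilinear (fun _ => hM) (fun _ => hv)

theorem Matrix.mulVec_intervalIntegral (M : Matrix m ι 𝕜) {v : ℝ → ι → 𝕜} {a b : ℝ}
    (hv : IntervalIntegrable v MeasureTheory.volume a b) :
    M *ᵥ ∫ s in a..b, v s = ∫ s in a..b, M *ᵥ v s :=
  ((Matrix.mulVecCLM (𝕜 := 𝕜) M).intervalIntegral_comp_comm hv).symm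

variable [DecidableEq ι]

theorem Matrix.exp_smul_mul_exp_smul (A : Matrix ι ι 𝕜) (s t : ℝ) :
    exp (s • A) * exp (t • A) = exp ((s + t) • A) := by
  rw [add_smul, Matrix.exp_add_of_commute _ _ (((Commute.refl A).smul_left s).smul_right t)]

-- Restates `hasDerivAt_exp_smul_const` with the `*` of `Matrix`, not that of the normed ring,
-- so that matrix lemmas such as `mulVec_mulVec` rewrite it.
theorem Matrix.hasDerivAt_exp_smul (A : Matrix ι ι 𝕜) (t : ℝ) :
    HasDerivAt (fun s : ℝ => exp (s • A)) (exp (t • A) * A) t :=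
  hasDerivAt_exp_smul_const A t

theorem Matrix.continuous_exp_smul (A : Matrix ι ι 𝕜) : Continuous fun s : ℝ => exp (s • A) :=
  (differentiable_exp_smul_const ℝ A).continuous

theorem Matrix.eq_exp_mulVec_add_integral (A : Matrix ι ι 𝕜) {u F : ℝ → ι → 𝕜}
    (hF : Continuous F) (hu : ∀ t, HasDerivAt u (-(A *ᵥ u t) + F t) t) (t : ℝ) :
    u t = exp (-(t • A)) *ᵥ u 0 + ∫ s in 0..t, exp ((s - t) • A) *ᵥ F s := by
  have hw : ∀ s, HasDerivAt (fun s => exp (s • A) *ᵥ u s) (exp (s • A) *ᵥ F s) s := fun s => by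
    refine ((A.hasDerivAt_exp_smul s).matrix_mulVec (hu s)).congr_deriv ?_
    rw [← mulVec_mulVec, mulVec_add, mulVec_neg, neg_add_cancel_comm]
  have hcont : Continuous fun s => exp (s • A) *ᵥ F s := A.continuous_exp_smul.matrix_mulVec hF
  have hFTC := integral_eq_sub_of_hasDerivAt (fun s _ => hw s) (hcont.intervalIntegrable 0 t)
  have hinv : ∀ x, exp (-(t • A)) *ᵥ (exp (t • A) *ᵥ x) = x := fun x => by
    rw [mulVec_mulVec, ← neg_smul, exp_smul_mul_exp_smul, neg_add_cancel, zero_smul, exp_zero,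
      one_mulVec]
  calc u t = exp (-(t • A)) *ᵥ (exp (t • A) *ᵥ u t) := (hinv _).symm
    _ = exp (-(t • A)) *ᵥ (u 0 + ∫ s in 0..t, exp (s • A) *ᵥ F s) := by
      rw [hFTC, zero_smul, exp_zero, one_mulVec, add_sub_cancel]
    _ = _ := by
      rw [mulVec_add, mulVec_intervalIntegral _ (hcont.intervalIntegrable 0 t)]
      simp only [mulVec_mulVec, ← neg_smul, exp_smul_mul_exp_smul, neg_add_eq_sub]

end

/-- Variation-of-constants formula for the linear matrix ODE with polynomial right-hand side:
the unique solution of u'(t) + A u(t) = Σ_{k=1}^m f_k t^{k-1}/(k-1)!, u(0) = u₀, is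
u(t) = φ₀(-tA) u₀ + Σ_{k=1}^m φ_k(-tA) f_k t^k, where for k ≥ 1 we use the integral
representation φ_k(-tA) = ∫_0^1 e^{-(1-s)tA} s^{k-1}/(k-1)! ds. -/
theorem matrix_ode_phi_solution_formula
    (n m : ℕ) (A : Matrix (Fin n) (Fin n) ℂ) (f : Fin m → (Fin n → ℂ))
    (u : ℝ → (Fin n → ℂ)) (u₀ : Fin n → ℂ)
    (hu0 : u 0 = u₀)
    (hode : ∀ t : ℝ, HasDerivAt u
      (-(A.mulVec (u t)) + ∑ k : Fin m, ((t ^ (k : ℕ) / (Nat.factorial k) : ℝ)) • f k) t) :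
    ∀ t : ℝ, u t =
      (NormedSpace.exp (-(t • A))).mulVec u₀ +
      ∑ k : Fin m, (t ^ ((k : ℕ) + 1)) •
        (∫ s in (0:ℝ)..1,
          ((s ^ (k : ℕ) / (Nat.factorial k) : ℝ)) •
            (NormedSpace.exp (-((1 - s) * t) • A)).mulVec (f k)) := by
  intro t
  have hF : Continuous fun s : ℝ => ∑ k : Fin m, (s ^ (k : ℕ) / (Nat.factorial k : ℝ)) • f k := by
    fun_prop
  have hexp : Continuous fun s : ℝ => exp ((s - t) • A) :=
    A.continuous_exp_smul.comp (continuous_sub_right t)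
  rw [A.eq_exp_mulVec_add_integral hF hode t, hu0]
  simp only [mulVec_sum, mulVec_smul, div_eq_mul_inv, mul_smul]
  rw [integral_finsetSum fun k _ => Continuous.intervalIntegrable (by fun_prop) 0 t]
  congr 1
  refine Finset.sum_congr rfl fun k _ => ?_
  rw [← pow_succ_smul_integral_pow_smul_comp_mul_left]
  congr 2
  funext σ
  rw [show t * σ - t = -((1 - σ) * t) by ring]
end

section
/- Let V, Q be Hilbert spaces and B : V → Q* a bounded linear operator satisfying the inf-sup condition: there is β > 0 with sup_{v ≠ 0} ⟨Bv, q⟩/‖v‖_V ≥ β ‖q‖_Q for all q ∈ Q. Then B is surjective and admits a bounded right-inverse B⁻ : Q* → V with ‖B⁻ g‖_V ≤ β⁻¹ ‖g‖_{Q*}. -/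
open InnerProductSpace RealInnerProductSpace

/-- The inf-sup condition implies surjectivity of B : V → Q* and the existence of a bounded
right-inverse B⁻ : Q* → V with ‖B⁻ g‖ ≤ β⁻¹ ‖g‖. Here Q* is modelled as Q →L[ℝ] ℝ and
⟨Bv, q⟩ = B v q. -/
theorem infsup_implies_right_inverse
    {V Q : Type*} [NormedAddCommGroup V] [InnerProductSpace ℝ V] [CompleteSpace V]
    [NormedAddCommGroup Q] [InnerProductSpace ℝ Q] [CompleteSpace Q]
    (B : V →L[ℝ] (Q →L[ℝ] ℝ))
    (β : ℝ) (hβ : 0 < β)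
    (hinfsup : ∀ q : Q, β * ‖q‖ ≤ ⨆ v : {v : V // v ≠ 0}, B v q / ‖(v : V)‖) :
    Function.Surjective B ∧
      ∃ Binv : (Q →L[ℝ] ℝ) → V,
        (∀ g : Q →L[ℝ] ℝ, B (Binv g) = g) ∧
        (∀ g : Q →L[ℝ] ℝ, ‖Binv g‖ ≤ β⁻¹ * ‖g‖) := by
  -- the "transpose" map T : Q → V with ⟪T q, v⟫ = B v q
  set Tlin : Q →ₗ[ℝ] V :=
    { toFun := fun q => (toDual ℝ V).symm (B.flip q)
      map_add' := by intro x y; simp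
      map_smul' := by intro c x; simp }
  have hTcont : ∀ q : Q, ‖Tlin q‖ ≤ ‖B.flip‖ * ‖q‖ := by
    intro q
    simp only [Tlin, LinearMap.coe_mk, AddHom.coe_mk, LinearIsometryEquiv.norm_map]
    exact (B.flip).le_opNorm q
  set T : Q →L[ℝ] V := Tlin.mkContinuous ‖B.flip‖ hTcont
  have hT : ∀ (q : Q) (v : V), ⟪T q, v⟫_ℝ = B v q := by
    intro q v
    simp [T, Tlin, toDual_symm_apply]
  have lower : ∀ q : Q, β * ‖q‖ ≤ ‖T q‖ := by
    intro q
    refine (hinfsup q).trans (Real.iSup_le ?_ (norm_nonneg _))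
    rintro ⟨v, hv⟩
    rw [div_le_iff₀ (by simpa using hv)]
    calc B v q = ⟪T q, v⟫_ℝ := (hT q v).symm
      _ ≤ ‖T q‖ * ‖v‖ := real_inner_le_norm _ _
  -- the coercive bilinear form a p q = B (T p) q = ⟪T p, T q⟫
  set a : Q →L[ℝ] Q →L[ℝ] ℝ := B.comp T
  have ha : ∀ p q : Q, a p q = ⟪T p, T q⟫_ℝ := by
    intro p q
    rw [real_inner_comm]
    exact (hT q (T p)).symm
  have coercive : IsCoercive a := by
    refine ⟨β * β, mul_pos hβ hβ, fun q => ?_⟩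
    rw [ha]
    calc β * β * ‖q‖ * ‖q‖ = (β * ‖q‖) * (β * ‖q‖) := by ring
      _ ≤ ‖T q‖ * ‖T q‖ :=
        mul_self_le_mul_self (by positivity) (lower q)
      _ = ⟪T q, T q⟫_ℝ := (real_inner_self_eq_norm_mul_norm (T q)).symm
  set E := coercive.continuousLinearEquivOfBilin
  -- the right inverse
  have key : ∀ g : Q →L[ℝ] ℝ, B (T (E.symm ((toDual ℝ Q).symm g))) = g ∧
      ‖T (E.symm ((toDual ℝ Q).symm g))‖ ≤ β⁻¹ * ‖g‖ := by
    intro g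
    set r : Q := (toDual ℝ Q).symm g
    set p : Q := E.symm r
    set v : V := T p
    have hBv : B v = g := by
      ext q
      have h1 : B v q = a p q := rfl
      have h2 : a p q = ⟪E p, q⟫_ℝ := (coercive.continuousLinearEquivOfBilin_apply p q).symm
      have h3 : E p = r := E.apply_symm_apply r
      rw [h1, h2, h3]
      exact toDual_symm_apply
    refine ⟨hBv, ?_⟩
    have hv2 : ‖v‖ * ‖v‖ ≤ ‖g‖ * ‖p‖ := by
      calc ‖v‖ * ‖v‖ = ⟪T p, T p⟫_ℝ := (real_inner_self_eq_norm_mul_norm v).symm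
        _ = a p p := (ha p p).symm
        _ = B v p := rfl
        _ = g p := by rw [hBv]
        _ ≤ ‖g‖ * ‖p‖ := (le_abs_self _).trans (by simpa using g.le_opNorm p)
    have hp : ‖p‖ ≤ β⁻¹ * ‖v‖ := by
      rw [le_inv_mul_iff₀ hβ]
      exact lower p
    rcases eq_or_lt_of_le (norm_nonneg v) with h0 | h0
    · rw [← h0]; positivity
    · have h1 : ‖v‖ * ‖v‖ ≤ (β⁻¹ * ‖g‖) * ‖v‖ := by
        have := hv2.trans (mul_le_mul_of_nonneg_left hp (norm_nonneg g))
        nlinarith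
      exact le_of_mul_le_mul_right h1 h0
  refine ⟨fun g => ⟨_, (key g).1⟩, fun g => T (E.symm ((toDual ℝ Q).symm g)),
    fun g => (key g).1, fun g => (key g).2⟩
end

section
/- Let V, Q be Hilbert spaces, A ∈ L(V, V*) elliptic on V_ker := ker B, and B ∈ L(V, Q*) satisfying the inf-sup condition with constant β > 0. Then for every g ∈ Q* the saddle point problem A x + B* ν = 0 in V*, B x = g in Q*, has a unique solution (x, ν) ∈ V × Q, and moreover x lies in the complement space V_c := { v ∈ V : ⟨A v, w⟩ = 0 for all w ∈ V_ker }. -/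
/-!
Let `T : Q → V` be the Riesz representative of `B*`, so `⟪T q, v⟫ = B v q`; the inf-sup
condition says `β ‖q‖ ≤ ‖T q‖`. Hence `B ∘ T` is coercive on `Q`, making `B` onto by
Lax–Milgram, and `T` has closed range, equal to `(ker B)ᗮ`. Take `x₀` with `B x₀ = g`, and
`k ∈ ker B` (Lax–Milgram for `a` on `ker B`) with `a (x₀ + k)` vanishing on `ker B`; then the
Riesz representative of `-a (x₀ + k)` lies in `(ker B)ᗮ = range T`, which yields `ν`. For the
homogeneous problem, `x ∈ ker B` and `a x x = 0` force `x = 0`, and then `B* ν = 0` forces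
`ν = 0`.
-/

open InnerProductSpace RealInnerProductSpace
open LinearMap (ker range)

theorem IsCoercive.exists_forall_apply_eq {V : Type*} [NormedAddCommGroup V]
    [InnerProductSpace ℝ V] [CompleteSpace V] {c : V →L[ℝ] V →L[ℝ] ℝ} (hc : IsCoercive c)
    (g : StrongDual ℝ V) : ∃ p, ∀ q, c p q = g q := by
  refine ⟨hc.continuousLinearEquivOfBilin.symm ((toDual ℝ V).symm g), fun q => ?_⟩
  rw [← hc.continuousLinearEquivOfBilin_apply, ContinuousLinearEquiv.apply_symm_apply,
    toDual_symm_apply]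

theorem isClosed_range_of_mul_norm_le {E F : Type*} [NormedAddCommGroup E] [NormedSpace ℝ E]
    [CompleteSpace E] [NormedAddCommGroup F] [NormedSpace ℝ F] (f : E →L[ℝ] F) {β : ℝ}
    (hβ : 0 < β) (hf : ∀ x, β * ‖x‖ ≤ ‖f x‖) : IsClosed (range (f : E →ₗ[ℝ] F) : Set F) := by
  have hanti : AntilipschitzWith (Real.toNNReal β⁻¹) f :=
    f.antilipschitz_of_bound fun x => by
      rw [Real.coe_toNNReal _ (inv_nonneg.mpr hβ.le), inv_mul_eq_div, le_div_iff₀' hβ]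
      exact hf x
  rw [LinearMap.coe_range, ContinuousLinearMap.coe_coe]
  exact hanti.isClosed_range f.uniformContinuous

theorem exists_mem_forall_apply_add_eq_zero {V : Type*} [NormedAddCommGroup V]
    [InnerProductSpace ℝ V] (K : Submodule ℝ V) [CompleteSpace K] (a : V →L[ℝ] V →L[ℝ] ℝ)
    {μ : ℝ} (hμ : 0 < μ) (ha : ∀ v ∈ K, μ * ‖v‖ ^ 2 ≤ a v v) (y : V) :
    ∃ k ∈ K, ∀ w ∈ K, a (y + k) w = 0 := by
  have hcoercive : IsCoercive (a.bilinearComp K.subtypeL K.subtypeL) :=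
    ⟨μ, hμ, fun u => by simpa [sq, mul_assoc] using ha u u.2⟩
  obtain ⟨k, hk⟩ := hcoercive.exists_forall_apply_eq (-(a y) ∘L K.subtypeL)
  refine ⟨k, k.2, fun w hw => ?_⟩
  have hkw : a k w = -a y w := hk ⟨w, hw⟩
  simp [hkw]

section RieszAdjoint

variable {V Q : Type*} [NormedAddCommGroup V] [InnerProductSpace ℝ V] [CompleteSpace V]
  [NormedAddCommGroup Q] [InnerProductSpace ℝ Q]

noncomputable def rieszAdjoint (B : V →L[ℝ] Q →L[ℝ] ℝ) : Q →L[ℝ] V where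
  toFun q := (toDual ℝ V).symm (B.flip q)
  map_add' p q := by simp
  map_smul' r q := by simp
  cont := (toDual ℝ V).symm.continuous.comp B.flip.continuous

@[simp]
theorem inner_rieszAdjoint_left (B : V →L[ℝ] Q →L[ℝ] ℝ) (q : Q) (v : V) :
    ⟪rieszAdjoint B q, v⟫ = B v q := by
  simp [rieszAdjoint]

theorem ker_eq_orthogonal_range_rieszAdjoint (B : V →L[ℝ] Q →L[ℝ] ℝ) :
    ker (B : V →ₗ[ℝ] Q →L[ℝ] ℝ) = (range (rieszAdjoint B : Q →ₗ[ℝ] V))ᗮ := by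
  ext v
  simp [Submodule.mem_orthogonal, ContinuousLinearMap.ext_iff]

theorem mul_norm_le_norm_rieszAdjoint {B : V →L[ℝ] Q →L[ℝ] ℝ} {β : ℝ}
    (hinfsup : ∀ q : Q, β * ‖q‖ ≤ ⨆ v : {v : V // v ≠ 0}, B v q / ‖(v : V)‖) (q : Q) :
    β * ‖q‖ ≤ ‖rieszAdjoint B q‖ := by
  refine (hinfsup q).trans (Real.iSup_le (fun ⟨v, hv⟩ => ?_) (norm_nonneg _))
  rw [div_le_iff₀ (norm_pos_iff.mpr hv), ← inner_rieszAdjoint_left]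
  exact real_inner_le_norm _ _

variable [CompleteSpace Q] {B : V →L[ℝ] Q →L[ℝ] ℝ} {β : ℝ}

-- The closed range theorem for `B*`.
theorem range_rieszAdjoint_eq_orthogonal_ker (hβ : 0 < β)
    (hB : ∀ q, β * ‖q‖ ≤ ‖rieszAdjoint B q‖) :
    range (rieszAdjoint B : Q →ₗ[ℝ] V) = (ker (B : V →ₗ[ℝ] Q →L[ℝ] ℝ))ᗮ := by
  rw [ker_eq_orthogonal_range_rieszAdjoint, Submodule.orthogonal_orthogonal_eq_closure,
    (isClosed_range_of_mul_norm_le _ hβ hB).submodule_topologicalClosure_eq]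

theorem exists_forall_apply_eq_of_forall_mem_ker (hβ : 0 < β)
    (hB : ∀ q, β * ‖q‖ ≤ ‖rieszAdjoint B q‖) (f : StrongDual ℝ V)
    (hf : ∀ v ∈ ker (B : V →ₗ[ℝ] Q →L[ℝ] ℝ), f v = 0) : ∃ ν, ∀ v, B v ν = f v := by
  have hr : (toDual ℝ V).symm f ∈ range (rieszAdjoint B : Q →ₗ[ℝ] V) := by
    rw [range_rieszAdjoint_eq_orthogonal_ker hβ hB, Submodule.mem_orthogonal']
    intro v hv
    rw [toDual_symm_apply, hf v hv]
  obtain ⟨ν, hν⟩ := hr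
  rw [ContinuousLinearMap.coe_coe] at hν
  exact ⟨ν, fun v => by rw [← inner_rieszAdjoint_left, hν, toDual_symm_apply]⟩

theorem surjective_of_mul_norm_le_norm_rieszAdjoint (hβ : 0 < β)
    (hB : ∀ q, β * ‖q‖ ≤ ‖rieszAdjoint B q‖) : Function.Surjective B := by
  intro g
  have hcoercive : IsCoercive (B ∘L rieszAdjoint B) := by
    refine ⟨β * β, mul_pos hβ hβ, fun q => ?_⟩
    rw [ContinuousLinearMap.comp_apply, ← inner_rieszAdjoint_left, real_inner_self_eq_norm_mul_norm]
    calc β * β * ‖q‖ * ‖q‖ = β * ‖q‖ * (β * ‖q‖) := by ring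
      _ ≤ _ := mul_le_mul (hB q) (hB q) (by positivity) (norm_nonneg _)
  obtain ⟨p, hp⟩ := hcoercive.exists_forall_apply_eq g
  exact ⟨rieszAdjoint B p, ContinuousLinearMap.ext hp⟩

omit [CompleteSpace Q] in
theorem eq_zero_of_forall_apply_eq_zero (hβ : 0 < β) (hB : ∀ q, β * ‖q‖ ≤ ‖rieszAdjoint B q‖)
    {ν : Q} (hν : ∀ v, B v ν = 0) : ν = 0 := by
  have hT : rieszAdjoint B ν = 0 := by
    rw [← inner_self_eq_zero (𝕜 := ℝ), inner_rieszAdjoint_left, hν]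
  have := hB ν
  rw [hT, norm_zero] at this
  exact norm_le_zero_iff.mp (nonpos_of_mul_nonpos_right this hβ)

end RieszAdjoint

section SaddlePoint

variable {V Q : Type*} [NormedAddCommGroup V] [InnerProductSpace ℝ V] [CompleteSpace V]
  [NormedAddCommGroup Q] [InnerProductSpace ℝ Q]
  {a : V →L[ℝ] V →L[ℝ] ℝ} {B : V →L[ℝ] Q →L[ℝ] ℝ} {μ β : ℝ}

theorem saddle_point_exists [CompleteSpace Q] (hμ : 0 < μ) (hβ : 0 < β)
    (hell : ∀ v ∈ ker (B : V →ₗ[ℝ] Q →L[ℝ] ℝ), μ * ‖v‖ ^ 2 ≤ a v v)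
    (hB : ∀ q, β * ‖q‖ ≤ ‖rieszAdjoint B q‖) (g : StrongDual ℝ Q) :
    ∃ x ν, (∀ v, a x v + B v ν = 0) ∧ B x = g := by
  have : CompleteSpace (ker (B : V →ₗ[ℝ] Q →L[ℝ] ℝ)) := B.isClosed_ker.completeSpace_coe
  obtain ⟨x₀, rfl⟩ := surjective_of_mul_norm_le_norm_rieszAdjoint hβ hB g
  obtain ⟨k, hk, hxk⟩ := exists_mem_forall_apply_add_eq_zero _ a hμ hell x₀
  obtain ⟨ν, hν⟩ := exists_forall_apply_eq_of_forall_mem_ker hβ hB (-a (x₀ + k))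
    fun v hv => neg_eq_zero.mpr (hxk v hv)
  refine ⟨x₀ + k, ν, fun v => by simp [hν], ?_⟩
  rw [map_add, show B k = 0 from hk, add_zero]

theorem saddle_point_eq_zero (hμ : 0 < μ) (hβ : 0 < β)
    (hell : ∀ v ∈ ker (B : V →ₗ[ℝ] Q →L[ℝ] ℝ), μ * ‖v‖ ^ 2 ≤ a v v)
    (hB : ∀ q, β * ‖q‖ ≤ ‖rieszAdjoint B q‖) {x : V} {ν : Q}
    (hA : ∀ v, a x v + B v ν = 0) (hx : B x = 0) : x = 0 ∧ ν = 0 := by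
  have hx0 : x = 0 := by
    have haxx : a x x = 0 := by simpa [hx] using hA x
    have hμx : μ * ‖x‖ ^ 2 ≤ 0 := haxx ▸ hell x hx
    simpa [hμ.ne'] using le_antisymm hμx (by positivity)
  subst hx0
  exact ⟨rfl, eq_zero_of_forall_apply_eq_zero hβ hB fun v => by simpa using hA v⟩

theorem saddle_point_unique (hμ : 0 < μ) (hβ : 0 < β)
    (hell : ∀ v ∈ ker (B : V →ₗ[ℝ] Q →L[ℝ] ℝ), μ * ‖v‖ ^ 2 ≤ a v v)
    (hB : ∀ q, β * ‖q‖ ≤ ‖rieszAdjoint B q‖) {x y : V} {ν η : Q}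
    (hx : ∀ v, a x v + B v ν = 0) (hy : ∀ v, a y v + B v η = 0) (hxy : B x = B y) :
    x = y ∧ ν = η := by
  have hdiff : ∀ v, a (x - y) v + B v (ν - η) = 0 := fun v => by
    simp only [map_sub, sub_apply]
    linarith [hx v, hy v]
  simpa only [sub_eq_zero] using
    saddle_point_eq_zero hμ hβ hell hB hdiff (by rw [map_sub, hxy, sub_self])

end SaddlePoint

/-- Unique solvability of the stationary saddle point problem A x + B* ν = 0, B x = g,
and the fact that the solution component x lies in the complement space
V_c = {v ∈ V : ⟨A v, w⟩ = 0 for all w ∈ V_ker}, where V_ker = ker B. -/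
theorem saddle_point_unique_solvability
    {V Q : Type*} [NormedAddCommGroup V] [InnerProductSpace ℝ V] [CompleteSpace V]
    [NormedAddCommGroup Q] [InnerProductSpace ℝ Q] [CompleteSpace Q]
    (a : V →L[ℝ] V →L[ℝ] ℝ)              -- the form of A ∈ L(V, V*)
    (B : V →L[ℝ] (Q →L[ℝ] ℝ))            -- B ∈ L(V, Q*)
    (μ β : ℝ) (hμ : 0 < μ) (hβ : 0 < β)
    (hell : ∀ v : V, (∀ q : Q, B v q = 0) → μ * ‖v‖ ^ 2 ≤ a v v)  -- A elliptic on ker B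
    (hinfsup : ∀ q : Q, β * ‖q‖ ≤ ⨆ v : {v : V // v ≠ 0}, B v q / ‖(v : V)‖) :
    ∀ g : Q →L[ℝ] ℝ,
      (∃! p : V × Q,
        (∀ v : V, a p.1 v + B v p.2 = 0) ∧ (∀ q : Q, B p.1 q = g q)) ∧
      (∀ p : V × Q,
        ((∀ v : V, a p.1 v + B v p.2 = 0) ∧ (∀ q : Q, B p.1 q = g q)) →
        ∀ w : V, (∀ q : Q, B w q = 0) → a p.1 w = 0) := by
  intro g
  have hB := mul_norm_le_norm_rieszAdjoint hinfsup
  have hellK : ∀ v ∈ ker (B : V →ₗ[ℝ] Q →L[ℝ] ℝ), μ * ‖v‖ ^ 2 ≤ a v v :=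
    fun v hv => hell v fun q => by simp [show B v = 0 from hv]
  obtain ⟨x, ν, hA, hx⟩ := saddle_point_exists hμ hβ hellK hB g
  refine ⟨⟨(x, ν), ⟨hA, fun q => by rw [hx]⟩, ?_⟩,
    fun p ⟨hpA, _⟩ w hw => by simpa [hw] using hpA w⟩
  rintro ⟨y, η⟩ ⟨hyA, hyB⟩
  obtain ⟨rfl, rfl⟩ :=
    saddle_point_unique hμ hβ hellK hB hyA hA (by rw [hx]; exact ContinuousLinearMap.ext hyB)
  rfl
end

section
/- Let A ∈ L(V, V*) be self-adjoint and elliptic on V_ker = ker B with B satisfying the inf-sup condition, and let u solve the linear PDAE u̇ + A u + B* λ = f, B u = g with f ∈ L²(0,T;H), g ∈ H¹(0,T;Q*), and consistent initial value u_0 ∈ V (B u_0 = g(0)). Then for all t ∈ [0,T]: ‖u(t) - B⁻ g(t)‖_A² ≤ ‖u_0 - B⁻ g(0)‖_A² + ∫_0^t ‖f(s) - B⁻ ġ(s)‖_H² ds, where ‖v‖_A² = ⟨A v, v⟩ and B⁻ is the A-orthogonal right-inverse of B. -/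
/-!
Write `w = u - B⁻g`. Differentiating the constraint gives `B u̇ = ġ`, so `ẇ = u̇ - B⁻ġ` lies in
`ker B`. Testing the dynamic equation with `ẇ` kills the multiplier term, and since `B⁻g` is
`A`-orthogonal to `ker B` it leaves `a(w, ẇ) = ⟨f - B⁻ġ, ẇ⟩_H - ‖ẇ‖²_H`. Hence
`d/dt ‖w‖²_A = 2 a(w, ẇ) ≤ ‖f - B⁻ġ‖²_H`, and integrating in time gives the estimate.
-/

open Set

theorem le_add_integral_of_hasDerivWithinAt_le {E E' φ : ℝ → ℝ} {a b t : ℝ}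
    (hE : ∀ s ∈ Icc a b, HasDerivWithinAt E (E' s) (Icc a b) s)
    (hφ : ContinuousOn φ (Icc a b)) (hle : ∀ s ∈ Ioo a b, E' s ≤ φ s) (ht : t ∈ Icc a b) :
    E t ≤ E a + ∫ s in a..t, φ s := by
  have hsub : Icc a t ⊆ Icc a b := Icc_subset_Icc_right ht.2
  have hIoo : ∀ s ∈ Ioo a t, s ∈ Ioo a b := fun s hs => ⟨hs.1, hs.2.trans_le ht.2⟩
  have := intervalIntegral.sub_le_integral_of_hasDeriv_right_of_le ht.1
    (fun s hs => (hE s (hsub hs)).continuousWithinAt.mono hsub)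
    (fun s hs => ((hE s (Ioo_subset_Icc_self (hIoo s hs))).hasDerivAt
      (Icc_mem_nhds (hIoo s hs).1 (hIoo s hs).2)).hasDerivWithinAt)
    ((hφ.mono hsub).integrableOn_Icc) (fun s hs => hle s (hIoo s hs))
  linarith

theorem ContinuousLinearMap.apply_eq_of_hasDerivWithinAt_of_eqOn
    {E F : Type*} [NormedAddCommGroup E] [NormedSpace ℝ E] [NormedAddCommGroup F]
    [NormedSpace ℝ F] (L : E →L[ℝ] F) {u : ℝ → E} {g : ℝ → F} {u' : E} {g' : F} {s : Set ℝ}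
    {x : ℝ} (hu : HasDerivWithinAt u u' s x) (hg : HasDerivWithinAt g g' s x)
    (hLu : EqOn (L ∘ u) g s) (hx : x ∈ s) (hs : UniqueDiffWithinAt ℝ s x) : L u' = g' :=
  hs.eq_deriv s (L.hasFDerivAt.comp_hasDerivWithinAt x hu)
    (hg.congr (fun _ hy => hLu hy) (hLu hx))

theorem HasDerivWithinAt.bilin_self {V : Type*} [NormedAddCommGroup V] [NormedSpace ℝ V]
    (a : V →L[ℝ] V →L[ℝ] ℝ) (hsym : ∀ v w : V, a v w = a w v) {w : ℝ → V} {w' : V}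
    {s : Set ℝ} {x : ℝ} (hw : HasDerivWithinAt w w' s x) :
    HasDerivWithinAt (fun t => a (w t) (w t)) (2 * a (w x) w') s x := by
  have := (a.hasFDerivAt.comp_hasDerivWithinAt x hw).clm_apply hw
  simpa only [Function.comp_apply, hsym w' (w x), two_mul] using this

theorem two_mul_inner_sub_norm_sq_le {H : Type*} [NormedAddCommGroup H] [InnerProductSpace ℝ H]
    (d x : H) : 2 * (inner ℝ d x - ‖x‖ ^ 2) ≤ ‖d‖ ^ 2 := by
  nlinarith [norm_sub_sq_real d x, sq_nonneg ‖d - x‖, sq_nonneg ‖x‖]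

theorem two_mul_energy_rate_le {V H Q : Type*} [NormedAddCommGroup V] [InnerProductSpace ℝ V]
    [NormedAddCommGroup H] [InnerProductSpace ℝ H] [NormedAddCommGroup Q] [InnerProductSpace ℝ Q]
    (ι : V →L[ℝ] H) (a : V →L[ℝ] V →L[ℝ] ℝ) (B : V →L[ℝ] (Q →L[ℝ] ℝ))
    (Binv : (Q →L[ℝ] ℝ) →L[ℝ] V) (hrinv : ∀ g : Q →L[ℝ] ℝ, B (Binv g) = g)
    (hBinvVc : ∀ g : Q →L[ℝ] ℝ, ∀ w : V, (∀ q : Q, B w q = 0) → a (Binv g) w = 0)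
    {u u' : V} {lam : Q} {f : H} (g : Q →L[ℝ] ℝ) {g' : Q →L[ℝ] ℝ}
    (heq : ∀ v : V, inner ℝ (ι u') (ι v) + a u v + B v lam = (inner ℝ f (ι v) : ℝ))
    (hBu' : B u' = g') :
    2 * a (u - Binv g) (u' - Binv g') ≤ ‖f - ι (Binv g')‖ ^ 2 := by
  set w' := u' - Binv g'
  have hker : ∀ q, B w' q = 0 := by simp [w', hrinv, hBu']
  have hA : a u w' = a (u - Binv g) w' := by
    rw [map_sub a u (Binv g), sub_apply, hBinvVc g w' hker, sub_zero]
  have hH : inner ℝ (ι u') (ι w') = ‖ι w'‖ ^ 2 + inner ℝ (ι (Binv g')) (ι w') := by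
    rw [show u' = w' + Binv g' by simp [w'], map_add, inner_add_left,
      real_inner_self_eq_norm_sq]
  have hrate : a (u - Binv g) w' = inner ℝ (f - ι (Binv g')) (ι w') - ‖ι w'‖ ^ 2 := by
    have := heq w'
    rw [hker lam, add_zero, hA, hH] at this
    rw [inner_sub_left]
    linarith
  rw [hrate]
  exact two_mul_inner_sub_norm_sq_le _ _

theorem pdae_energy_estimate_general
    {V H Q : Type*} [NormedAddCommGroup V] [InnerProductSpace ℝ V]
    [NormedAddCommGroup H] [InnerProductSpace ℝ H]
    [NormedAddCommGroup Q] [InnerProductSpace ℝ Q]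
    (ι : V →L[ℝ] H)                                  -- Gelfand triple embedding V ↪ H
    (a : V →L[ℝ] V →L[ℝ] ℝ)                          -- the form of A ∈ L(V, V*)
    (B : V →L[ℝ] (Q →L[ℝ] ℝ))                        -- B ∈ L(V, Q*)
    (Binv : (Q →L[ℝ] ℝ) →L[ℝ] V)                     -- A-orthogonal right-inverse B⁻
    (T : ℝ) (hT : 0 < T)
    (hsym : ∀ v w : V, a v w = a w v)                                   -- A self-adjoint
    (hrinv : ∀ g : Q →L[ℝ] ℝ, B (Binv g) = g)                          -- B B⁻ = id
    (hBinvVc : ∀ g : Q →L[ℝ] ℝ, ∀ w : V, (∀ q : Q, B w q = 0) →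
      a (Binv g) w = 0)                                                 -- image B⁻ ⊆ V_c
    (u u' : ℝ → V) (lam : ℝ → Q) (f : ℝ → H) (g g' : ℝ → (Q →L[ℝ] ℝ))
    (hu' : ∀ t ∈ Set.Icc (0:ℝ) T, HasDerivWithinAt u (u' t) (Set.Icc 0 T) t)
    (hg' : ∀ t ∈ Set.Icc (0:ℝ) T, HasDerivWithinAt g (g' t) (Set.Icc 0 T) t)
    (hfc : ContinuousOn f (Set.Icc 0 T))
    (hg'c : ContinuousOn g' (Set.Icc 0 T))
    -- the dynamic equation u̇ + A u + B* λ = f in V*: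
    (heq : ∀ t ∈ Set.Icc (0:ℝ) T, ∀ v : V,
      inner ℝ (ι (u' t)) (ι v) + a (u t) v + B v (lam t) = (inner ℝ (f t) (ι v) : ℝ))
    -- the constraint B u = g in Q*:
    (hcon : ∀ t ∈ Set.Icc (0:ℝ) T, ∀ q : Q, B (u t) q = g t q) :
    ∀ t ∈ Set.Icc (0:ℝ) T,
      a (u t - Binv (g t)) (u t - Binv (g t)) ≤
        a (u 0 - Binv (g 0)) (u 0 - Binv (g 0)) +
          ∫ s in (0:ℝ)..t, ‖f s - ι (Binv (g' s))‖ ^ 2 := by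
  have hBu' : ∀ s ∈ Icc 0 T, B (u' s) = g' s := fun s hs =>
    B.apply_eq_of_hasDerivWithinAt_of_eqOn (hu' s hs) (hg' s hs)
      (fun r hr => ContinuousLinearMap.ext (hcon r hr)) hs (uniqueDiffOn_Icc hT s hs)
  have henergy : ∀ s ∈ Icc 0 T, HasDerivWithinAt (fun r => a (u r - Binv (g r)) (u r - Binv (g r)))
      (2 * a (u s - Binv (g s)) (u' s - Binv (g' s))) (Icc 0 T) s := fun s hs =>
    ((hu' s hs).sub (Binv.hasFDerivAt.comp_hasDerivWithinAt s (hg' s hs))).bilin_self a hsym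
  have hsource : ContinuousOn (fun s => ‖f s - ι (Binv (g' s))‖ ^ 2) (Icc 0 T) :=
    (hfc.sub ((ι.comp Binv).continuous.comp_continuousOn hg'c)).norm.pow 2
  exact fun t ht => le_add_integral_of_hasDerivWithinAt_le henergy hsource
    (fun s hs => two_mul_energy_rate_le ι a B Binv hrinv hBinvVc (g s)
      (heq s (Ioo_subset_Icc_self hs)) (hBu' s (Ioo_subset_Icc_self hs))) ht

/-- Energy estimate for the linear PDAE u̇ + A u + B* λ = f, B u = g (A self-adjoint,
elliptic on ker B, B inf-sup stable): for all t ∈ [0,T],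
‖u(t) - B⁻g(t)‖²_A ≤ ‖u(0) - B⁻g(0)‖²_A + ∫₀ᵗ ‖f(s) - B⁻ġ(s)‖²_H ds,
where ‖v‖²_A = ⟨Av, v⟩ and B⁻ is the A-orthogonal right-inverse of B. -/
theorem pdae_energy_estimate
    {V H Q : Type*} [NormedAddCommGroup V] [InnerProductSpace ℝ V] [CompleteSpace V]
    [NormedAddCommGroup H] [InnerProductSpace ℝ H] [CompleteSpace H]
    [NormedAddCommGroup Q] [InnerProductSpace ℝ Q] [CompleteSpace Q]
    (ι : V →L[ℝ] H)                                  -- Gelfand triple embedding V ↪ H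
    (a : V →L[ℝ] V →L[ℝ] ℝ)                          -- the form of A ∈ L(V, V*)
    (B : V →L[ℝ] (Q →L[ℝ] ℝ))                        -- B ∈ L(V, Q*)
    (Binv : (Q →L[ℝ] ℝ) →L[ℝ] V)                     -- A-orthogonal right-inverse B⁻
    (μ β T : ℝ) (hμ : 0 < μ) (hβ : 0 < β) (hT : 0 < T)
    (hsym : ∀ v w : V, a v w = a w v)                                   -- A self-adjoint
    (hell : ∀ v : V, (∀ q : Q, B v q = 0) → μ * ‖v‖ ^ 2 ≤ a v v)       -- elliptic on ker B
    (hinfsup : ∀ q : Q, β * ‖q‖ ≤ ⨆ v : {v : V // v ≠ 0}, B v q / ‖(v : V)‖)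
    (hrinv : ∀ g : Q →L[ℝ] ℝ, B (Binv g) = g)                          -- B B⁻ = id
    (hBinvVc : ∀ g : Q →L[ℝ] ℝ, ∀ w : V, (∀ q : Q, B w q = 0) →
      a (Binv g) w = 0)                                                 -- image B⁻ ⊆ V_c
    (u u' : ℝ → V) (lam : ℝ → Q) (f : ℝ → H) (g g' : ℝ → (Q →L[ℝ] ℝ))
    (hu' : ∀ t ∈ Set.Icc (0:ℝ) T, HasDerivWithinAt u (u' t) (Set.Icc 0 T) t)
    (hg' : ∀ t ∈ Set.Icc (0:ℝ) T, HasDerivWithinAt g (g' t) (Set.Icc 0 T) t)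
    (hu'c : ContinuousOn u' (Set.Icc 0 T)) (hfc : ContinuousOn f (Set.Icc 0 T))
    (hg'c : ContinuousOn g' (Set.Icc 0 T))
    -- the dynamic equation u̇ + A u + B* λ = f in V*:
    (heq : ∀ t ∈ Set.Icc (0:ℝ) T, ∀ v : V,
      inner ℝ (ι (u' t)) (ι v) + a (u t) v + B v (lam t) = (inner ℝ (f t) (ι v) : ℝ))
    -- the constraint B u = g in Q*:
    (hcon : ∀ t ∈ Set.Icc (0:ℝ) T, ∀ q : Q, B (u t) q = g t q) :
    ∀ t ∈ Set.Icc (0:ℝ) T,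
      a (u t - Binv (g t)) (u t - Binv (g t)) ≤
        a (u 0 - Binv (g 0)) (u 0 - Binv (g 0)) +
          ∫ s in (0:ℝ)..t, ‖f s - ι (Binv (g' s))‖ ^ 2 :=
  pdae_energy_estimate_general ι a B Binv T hT hsym hrinv hBinvVc u u' lam f g g' hu' hg' hfc hg'c
    heq hcon
end
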